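/- With the same Hopf–Galois setup, the translation map satisfies (Δ_P ⊗_B id_P) ∘ qtrs = (σ ⊗_B id_P) ∘ (S ⊗ qtrs) ∘ Δ, i.e. Δ_P([g]₁) ⊗_B [g]₂ = [g⁽²⁾]₁ ⊗ S(g⁽¹⁾) ⊗_B [g⁽²⁾]₂ for all g ∈ H, where σ : H ⊗ P → P ⊗ H is the twist. -/
import Mathlib


open TensorProduct

noncomputable section

set_option synthInstance.maxHeartbeats 1000000
set_option maxHeartbeats 2000000

namespace Qtrs14Aux

variable {H P T U : Type*} [Ring H] [HopfAlgebra ℂ H] [Ring P] [Algebra ℂ P]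
  [AddCommGroup T] [Module ℂ T] [AddCommGroup U] [Module ℂ U]

/-- abbreviation for the antipode -/
abbrev S' : H →ₗ[ℂ] H := HopfAlgebra.antipode (R := ℂ)

/-- abbreviation for comultiplication -/
abbrev Δc : H →ₗ[ℂ] H ⊗[ℂ] H := Coalgebra.comul (R := ℂ)

lemma antipode_one : (S' : H →ₗ[ℂ] H) 1 = 1 := by
  have h := HopfAlgebra.mul_antipode_lTensor_comul_apply (R := ℂ) (A := H) 1
  simpa [Algebra.TensorProduct.one_def] using h

/-- multiply with antipode on the right factor : `a ⊗ b ↦ a * S b`. -/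
def mS : H ⊗[ℂ] H →ₗ[ℂ] H := LinearMap.mul' ℂ H ∘ₗ LinearMap.lTensor H (S' (H := H))

@[simp] lemma mS_tmul (a b : H) : mS (a ⊗ₜ[ℂ] b) = a * S' b := rfl

variable (βt : T →ₗ[ℂ] P ⊗[ℂ] H) (hbij : Function.Bijective βt)

/-- `Λ p t` is "multiplication of the first tensor leg of `t` by `p`",
transported through `βt`. -/
def Λ : P →ₗ[ℂ] T →ₗ[ℂ] T :=
  LinearMap.mk₂ ℂ
    (fun p t => (LinearEquiv.ofBijective βt hbij).symm ((p ⊗ₜ[ℂ] (1 : H)) * βt t))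
    (fun p p' t => by simp [add_tmul, add_mul])
    (fun c p t => by simp only [← smul_tmul', smul_mul_assoc, map_smul])
    (fun p t t' => by simp [mul_add])
    (fun c p t => by simp [mul_smul_comm])

lemma βt_Λ (p : P) (t : T) : βt (Λ βt hbij p t) = (p ⊗ₜ[ℂ] (1 : H)) * βt t := by
  rw [Λ, LinearMap.mk₂_apply]
  exact (LinearEquiv.ofBijective βt hbij).apply_symm_apply _

lemma Λ_mk (mk : P →ₗ[ℂ] P →ₗ[ℂ] T) (ΔP : P →ₗ[ℂ] P ⊗[ℂ] H)
    (hβ : ∀ x y : P, βt (mk x y) = (x ⊗ₜ[ℂ] (1 : H)) * ΔP y) (p u v : P) :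
    Λ βt hbij p (mk u v) = mk (p * u) v := by
  apply hbij.injective
  rw [βt_Λ, hβ, hβ, ← mul_assoc, Algebra.TensorProduct.tmul_mul_tmul, mul_one]

lemma Λ_one (t : T) : Λ βt hbij 1 t = t := by
  apply hbij.injective
  rw [βt_Λ, ← Algebra.TensorProduct.one_def, one_mul]

lemma Λ_mul (q p : P) (t : T) :
    Λ βt hbij (q * p) t = Λ βt hbij q (Λ βt hbij p t) := by
  apply hbij.injective
  rw [βt_Λ, βt_Λ, βt_Λ, ← mul_assoc, Algebra.TensorProduct.tmul_mul_tmul, mul_one]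

variable (qtrs : H →ₗ[ℂ] T)

/-- `χ (p ⊗ h) = Λ p (qtrs h)`; this is `β̃⁻¹`. -/
def χ : P ⊗[ℂ] H →ₗ[ℂ] T :=
  TensorProduct.lift (Λ βt hbij) ∘ₗ LinearMap.lTensor P qtrs

@[simp] lemma χ_tmul (p : P) (h : H) :
    χ βt hbij qtrs (p ⊗ₜ[ℂ] h) = Λ βt hbij p (qtrs h) := rfl

lemma βt_χ (hq : ∀ g : H, βt (qtrs g) = (1 : P) ⊗ₜ[ℂ] g) :
    ∀ w : P ⊗[ℂ] H, βt (χ βt hbij qtrs w) = w := by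
  intro w
  induction w using TensorProduct.induction_on with
  | zero => simp
  | tmul p h =>
      rw [χ_tmul, βt_Λ, hq, Algebra.TensorProduct.tmul_mul_tmul, mul_one, one_mul]
  | add w₁ w₂ ih₁ ih₂ => simp [ih₁, ih₂]

lemma χ_ΔP (mk : P →ₗ[ℂ] P →ₗ[ℂ] T) (ΔP : P →ₗ[ℂ] P ⊗[ℂ] H)
    (hβ : ∀ x y : P, βt (mk x y) = (x ⊗ₜ[ℂ] (1 : H)) * ΔP y)
    (hq : ∀ g : H, βt (qtrs g) = (1 : P) ⊗ₜ[ℂ] g) (y : P) :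
    χ βt hbij qtrs (ΔP y) = mk 1 y := by
  apply hbij.injective
  rw [βt_χ βt hbij qtrs hq, hβ, ← Algebra.TensorProduct.one_def, one_mul]

/-- `D h = Σ h₁ ⊗ qtrs h₂`. -/
def DD : H →ₗ[ℂ] H ⊗[ℂ] T := LinearMap.lTensor H qtrs ∘ₗ (Δc (H := H))

/-- `κ (a ⊗ b) = Σ (a * S b₁) ⊗ qtrs b₂`. -/
def κ : H ⊗[ℂ] H →ₗ[ℂ] H ⊗[ℂ] T :=
  TensorProduct.map mS qtrs ∘ₗ (TensorProduct.assoc ℂ H H H).symm.toLinearMap ∘ₗ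
    LinearMap.lTensor H (Δc (H := H))

variable (ΔP : P →ₗ[ℂ] P ⊗[ℂ] H)

/-- `F1 = ΔP ⊗ D`. -/
def F1 : P ⊗[ℂ] H →ₗ[ℂ] (P ⊗[ℂ] H) ⊗[ℂ] (H ⊗[ℂ] T) :=
  TensorProduct.map ΔP (DD qtrs)

@[simp] lemma F1_tmul (p : P) (h : H) :
    F1 qtrs ΔP (p ⊗ₜ[ℂ] h) = ΔP p ⊗ₜ[ℂ] DD qtrs h := rfl

/-- `N ((p ⊗ a) ⊗ (b ⊗ t)) = (a * S b) ⊗ Λ p t`. -/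
def NN : (P ⊗[ℂ] H) ⊗[ℂ] (H ⊗[ℂ] T) →ₗ[ℂ] H ⊗[ℂ] T :=
  TensorProduct.map mS (TensorProduct.lift (Λ βt hbij)) ∘ₗ
    (TensorProduct.tensorTensorTensorComm ℂ H P H T).toLinearMap ∘ₗ
    LinearMap.rTensor (H ⊗[ℂ] T) (TensorProduct.comm ℂ P H).toLinearMap

@[simp] lemma NN_tmul (p : P) (a b : H) (t : T) :
    NN βt hbij ((p ⊗ₜ[ℂ] a) ⊗ₜ[ℂ] (b ⊗ₜ[ℂ] t)) = (a * S' b) ⊗ₜ[ℂ] Λ βt hbij p t := by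
  simp [NN, tensorTensorTensorComm_tmul]

/-- `Q ((p ⊗ a) ⊗ (b ⊗ t)) = (p ⊗ (a * S b)) ⊗ t`. -/
def QQ : (P ⊗[ℂ] H) ⊗[ℂ] (H ⊗[ℂ] T) →ₗ[ℂ] (P ⊗[ℂ] H) ⊗[ℂ] T :=
  LinearMap.rTensor T
      (LinearMap.lTensor P (mS (H := H)) ∘ₗ (TensorProduct.assoc ℂ P H H).toLinearMap) ∘ₗ
    (TensorProduct.assoc ℂ (P ⊗[ℂ] H) H T).symm.toLinearMap

@[simp] lemma QQ_tmul (p : P) (a b : H) (t : T) :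
    QQ ((p ⊗ₜ[ℂ] a) ⊗ₜ[ℂ] (b ⊗ₜ[ℂ] t)) = (p ⊗ₜ[ℂ] (a * S' b)) ⊗ₜ[ℂ] t := by
  simp [QQ]

/-- `ι (w ⊗ t) = w ⊗ (1 ⊗ t)`. -/
def ιι : (P ⊗[ℂ] H) ⊗[ℂ] T →ₗ[ℂ] (P ⊗[ℂ] H) ⊗[ℂ] (H ⊗[ℂ] T) :=
  LinearMap.lTensor (P ⊗[ℂ] H) (TensorProduct.mk ℂ H T 1)

@[simp] lemma ιι_tmul (w : P ⊗[ℂ] H) (t : T) :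
    ιι (w ⊗ₜ[ℂ] t) = w ⊗ₜ[ℂ] ((1 : H) ⊗ₜ[ℂ] t) := rfl

/-- `j p = p ⊗ 1`. -/
def jj : P →ₗ[ℂ] P ⊗[ℂ] H := (TensorProduct.mk ℂ P H).flip 1

@[simp] lemma jj_apply (p : P) : (jj : P →ₗ[ℂ] P ⊗[ℂ] H) p = p ⊗ₜ[ℂ] (1 : H) := rfl

/-- `θ ((q ⊗ c) ⊗ t) = c ⊗ Λ q t`. -/
def θθ : (P ⊗[ℂ] H) ⊗[ℂ] T →ₗ[ℂ] H ⊗[ℂ] T :=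
  LinearMap.lTensor H (TensorProduct.lift (Λ βt hbij)) ∘ₗ
    (TensorProduct.assoc ℂ H P T).toLinearMap ∘ₗ
    LinearMap.rTensor T (TensorProduct.comm ℂ P H).toLinearMap

@[simp] lemma θθ_tmul (q : P) (c : H) (t : T) :
    θθ βt hbij ((q ⊗ₜ[ℂ] c) ⊗ₜ[ℂ] t) = c ⊗ₜ[ℂ] Λ βt hbij q t := by
  simp [θθ]



section Steps

set_option maxHeartbeats 1000000 in
lemma stepA (hPmul : ∀ x y : P, ΔP (x * y) = ΔP x * ΔP y) (x : P) (w : P ⊗[ℂ] H) :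
    F1 qtrs ΔP ((x ⊗ₜ[ℂ] (1 : H)) * w) =
      LinearMap.rTensor (H ⊗[ℂ] T) (LinearMap.mulLeft ℂ (ΔP x)) (F1 qtrs ΔP w) := by
  induction w using TensorProduct.induction_on with
  | zero => simp
  | tmul p h =>
      rw [Algebra.TensorProduct.tmul_mul_tmul, one_mul, F1_tmul, F1_tmul,
        LinearMap.rTensor_tmul, LinearMap.mulLeft_apply, hPmul]
  | add w₁ w₂ ih₁ ih₂ => simp only [mul_add, map_add, ih₁, ih₂]

set_option maxHeartbeats 1000000 in
lemma stepB (z : P ⊗[ℂ] H) (u : (P ⊗[ℂ] H) ⊗[ℂ] (H ⊗[ℂ] T)) :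
    NN βt hbij (LinearMap.rTensor (H ⊗[ℂ] T) (LinearMap.mulLeft ℂ z) u) =
      NN βt hbij (LinearMap.rTensor (H ⊗[ℂ] T) (LinearMap.mulLeft ℂ z) (ιι (QQ u))) := by
  induction u using TensorProduct.induction_on with
  | zero => simp
  | add u₁ u₂ ih₁ ih₂ => simp only [map_add, ih₁, ih₂]
  | tmul w v =>
      induction w using TensorProduct.induction_on with
      | zero => simp
      | add w₁ w₂ ih₁ ih₂ => simp only [add_tmul, map_add, ih₁, ih₂]
      | tmul p a =>
          induction v using TensorProduct.induction_on with
          | zero => simp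
          | add v₁ v₂ ih₁ ih₂ => simp only [tmul_add, map_add, ih₁, ih₂]
          | tmul b t =>
              rw [QQ_tmul, ιι_tmul, LinearMap.rTensor_tmul, LinearMap.rTensor_tmul,
                LinearMap.mulLeft_apply, LinearMap.mulLeft_apply]
              induction z using TensorProduct.induction_on with
              | zero => simp
              | add z₁ z₂ ih₁ ih₂ => simp only [add_mul, add_tmul, map_add, ih₁, ih₂]
              | tmul q c =>
                  rw [Algebra.TensorProduct.tmul_mul_tmul,
                    Algebra.TensorProduct.tmul_mul_tmul, NN_tmul, NN_tmul,
                    antipode_one, mul_one, mul_assoc]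

set_option maxHeartbeats 1000000 in
lemma stepC2 (u : (P ⊗[ℂ] H) ⊗[ℂ] H) :
    QQ (LinearMap.lTensor (P ⊗[ℂ] H) (DD qtrs) u) =
      (TensorProduct.assoc ℂ P H T).symm
        (LinearMap.lTensor P (κ qtrs) ((TensorProduct.assoc ℂ P H H) u)) := by
  induction u using TensorProduct.induction_on with
  | zero => simp only [map_zero, LinearEquiv.map_zero]
  | add u₁ u₂ ih₁ ih₂ => simp only [map_add, LinearEquiv.map_add, ih₁, ih₂]
  | tmul w b =>
      induction w using TensorProduct.induction_on with
      | zero => simp only [zero_tmul, map_zero, LinearEquiv.map_zero]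
      | add w₁ w₂ ih₁ ih₂ =>
          simp only [add_tmul, map_add, LinearEquiv.map_add, ih₁, ih₂]
      | tmul p a =>
          rw [LinearMap.lTensor_tmul, TensorProduct.assoc_tmul, LinearMap.lTensor_tmul]
          rw [show DD qtrs b = LinearMap.lTensor H qtrs ((Δc (H := H)) b) from rfl]
          rw [show (κ (T := T) qtrs) (a ⊗ₜ[ℂ] b) =
            TensorProduct.map mS qtrs
              ((TensorProduct.assoc ℂ H H H).symm (a ⊗ₜ[ℂ] (Δc (H := H)) b)) from rfl]
          induction ((Δc (H := H)) b) using TensorProduct.induction_on with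
          | zero => simp only [map_zero, tmul_zero, LinearEquiv.map_zero]
          | add v₁ v₂ ih₁ ih₂ =>
              simp only [map_add, tmul_add, LinearEquiv.map_add, ih₁, ih₂]
          | tmul b₁ b₂ =>
              rw [LinearMap.lTensor_tmul, QQ_tmul, TensorProduct.assoc_symm_tmul,
                TensorProduct.map_tmul, mS_tmul, TensorProduct.assoc_symm_tmul]

set_option maxHeartbeats 1000000 in
lemma stepC3 (h : H) : κ (T := T) qtrs ((Δc (H := H)) h) = (1 : H) ⊗ₜ[ℂ] qtrs h := by
  have hco : (LinearMap.lTensor H (Δc (H := H))) ((Δc (H := H)) h) =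
      (TensorProduct.assoc ℂ H H H)
        ((LinearMap.rTensor H (Δc (H := H))) ((Δc (H := H)) h)) :=
    (Coalgebra.coassoc_apply h).symm
  rw [show κ (T := T) qtrs ((Δc (H := H)) h) =
      TensorProduct.map mS qtrs ((TensorProduct.assoc ℂ H H H).symm
        ((LinearMap.lTensor H (Δc (H := H))) ((Δc (H := H)) h))) from rfl,
    hco, LinearEquiv.symm_apply_apply]
  have key : ∀ v : H ⊗[ℂ] H,
      TensorProduct.map (mS (H := H)) qtrs ((LinearMap.rTensor H (Δc (H := H))) v) =
        TensorProduct.map ((Algebra.linearMap ℂ H) ∘ₗ (Coalgebra.counit (R := ℂ))) qtrs v := by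
    intro v
    induction v using TensorProduct.induction_on with
    | zero => simp
    | add v₁ v₂ ih₁ ih₂ => simp only [map_add, ih₁, ih₂]
    | tmul a b =>
        rw [LinearMap.rTensor_tmul, TensorProduct.map_tmul, TensorProduct.map_tmul,
          LinearMap.comp_apply]
        congr 1
        exact HopfAlgebra.mul_antipode_lTensor_comul_apply (R := ℂ) a
  rw [key]
  have key2 : ∀ v : H ⊗[ℂ] H,
      TensorProduct.map ((Algebra.linearMap ℂ H) ∘ₗ (Coalgebra.counit (R := ℂ))) qtrs v =
        TensorProduct.map (Algebra.linearMap ℂ H) qtrs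
          ((LinearMap.rTensor H (Coalgebra.counit (R := ℂ))) v) := by
    intro v
    induction v using TensorProduct.induction_on with
    | zero => simp
    | add v₁ v₂ ih₁ ih₂ => simp only [map_add, ih₁, ih₂]
    | tmul a b => rfl
  rw [key2, Coalgebra.rTensor_counit_comul, TensorProduct.map_tmul]
  simp

set_option maxHeartbeats 1000000 in
lemma stepC34 (w : P ⊗[ℂ] H) :
    (TensorProduct.assoc ℂ P H T).symm
        (LinearMap.lTensor P (κ qtrs) (LinearMap.lTensor P (Δc (H := H)) w)) =
      TensorProduct.map jj qtrs w := by
  induction w using TensorProduct.induction_on with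
  | zero => simp only [map_zero, LinearEquiv.map_zero]
  | add w₁ w₂ ih₁ ih₂ => simp only [map_add, LinearEquiv.map_add, ih₁, ih₂]
  | tmul p h =>
      rw [LinearMap.lTensor_tmul, LinearMap.lTensor_tmul, stepC3,
        TensorProduct.assoc_symm_tmul, TensorProduct.map_tmul, jj_apply]

set_option maxHeartbeats 1000000 in
lemma stepC (hcoassoc : ∀ x : P,
      (TensorProduct.assoc ℂ P H H)
        ((TensorProduct.map ΔP LinearMap.id) (ΔP x)) =
      (TensorProduct.map LinearMap.id (Coalgebra.comul (R := ℂ))) (ΔP x)) (y : P) :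
    QQ (F1 qtrs ΔP (ΔP y)) = TensorProduct.map jj qtrs (ΔP y) := by
  have hF1 : F1 qtrs ΔP (ΔP y) =
      LinearMap.lTensor (P ⊗[ℂ] H) (DD qtrs)
        (LinearMap.rTensor H ΔP (ΔP y)) := by
    have h := (LinearMap.congr_fun
      (LinearMap.lTensor_comp_rTensor (f := ΔP) (g := DD (T := T) qtrs)) (ΔP y)).symm
    rw [LinearMap.comp_apply] at h
    exact h
  rw [hF1, stepC2]
  have h1 : (TensorProduct.assoc ℂ P H H) (LinearMap.rTensor H ΔP (ΔP y)) =
      LinearMap.lTensor P (Δc (H := H)) (ΔP y) := by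
    have := hcoassoc y
    rw [show (TensorProduct.map ΔP LinearMap.id : P ⊗[ℂ] H →ₗ[ℂ] (P ⊗[ℂ] H) ⊗[ℂ] H)
        = LinearMap.rTensor H ΔP from rfl] at this
    rw [this]; rfl
  rw [h1, stepC34]

set_option maxHeartbeats 1000000 in
lemma stepE (z : P ⊗[ℂ] H) (w : P ⊗[ℂ] H) :
    NN βt hbij (LinearMap.rTensor (H ⊗[ℂ] T) (LinearMap.mulLeft ℂ z)
        (ιι (TensorProduct.map jj qtrs w))) =
      θθ βt hbij (z ⊗ₜ[ℂ] χ βt hbij qtrs w) := by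
  induction w using TensorProduct.induction_on with
  | zero => simp
  | add w₁ w₂ ih₁ ih₂ => simp only [map_add, tmul_add, ih₁, ih₂]
  | tmul p h =>
      rw [TensorProduct.map_tmul, jj_apply, ιι_tmul, LinearMap.rTensor_tmul,
        LinearMap.mulLeft_apply, χ_tmul]
      induction z using TensorProduct.induction_on with
      | zero => simp
      | add z₁ z₂ ih₁ ih₂ => simp only [add_mul, add_tmul, map_add, ih₁, ih₂]
      | tmul q c =>
          rw [Algebra.TensorProduct.tmul_mul_tmul, mul_one, NN_tmul, θθ_tmul,
            antipode_one, mul_one, Λ_mul]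

set_option maxHeartbeats 1000000 in
lemma stepF (mk : P →ₗ[ℂ] P →ₗ[ℂ] T) (mk2 : (P ⊗[ℂ] H) →ₗ[ℂ] P →ₗ[ℂ] U)
    (Φ : H ⊗[ℂ] T →ₗ[ℂ] U)
    (hβ : ∀ x y : P, βt (mk x y) = (x ⊗ₜ[ℂ] (1 : H)) * ΔP y)
    (hΦ : ∀ (h : H) (x y : P), Φ (h ⊗ₜ[ℂ] mk x y) = mk2 (x ⊗ₜ[ℂ] h) y)
    (z : P ⊗[ℂ] H) (y : P) :
    Φ (θθ βt hbij (z ⊗ₜ[ℂ] mk 1 y)) = mk2 z y := by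
  induction z using TensorProduct.induction_on with
  | zero => simp
  | add z₁ z₂ ih₁ ih₂ =>
      simp only [add_tmul, map_add, ih₁, ih₂, LinearMap.add_apply]
  | tmul q c =>
      rw [θθ_tmul, Λ_mk βt hbij mk ΔP hβ, mul_one, hΦ]

end Steps

section Main

set_option maxHeartbeats 1000000 in
lemma ML (mk : P →ₗ[ℂ] P →ₗ[ℂ] T) (mk2 : (P ⊗[ℂ] H) →ₗ[ℂ] P →ₗ[ℂ] U)
    (Φ : H ⊗[ℂ] T →ₗ[ℂ] U)
    (hPmul : ∀ x y : P, ΔP (x * y) = ΔP x * ΔP y)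
    (hcoassoc : ∀ x : P,
      (TensorProduct.assoc ℂ P H H)
        ((TensorProduct.map ΔP LinearMap.id) (ΔP x)) =
      (TensorProduct.map LinearMap.id (Coalgebra.comul (R := ℂ))) (ΔP x))
    (hβ : ∀ x y : P, βt (mk x y) = (x ⊗ₜ[ℂ] (1 : H)) * ΔP y)
    (hq : ∀ g : H, βt (qtrs g) = (1 : P) ⊗ₜ[ℂ] g)
    (hΦ : ∀ (h : H) (x y : P), Φ (h ⊗ₜ[ℂ] mk x y) = mk2 (x ⊗ₜ[ℂ] h) y)
    (x y : P) :
    Φ (NN βt hbij (F1 qtrs ΔP ((x ⊗ₜ[ℂ] (1 : H)) * ΔP y))) = mk2 (ΔP x) y := by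
  rw [stepA qtrs ΔP hPmul, stepB, stepC qtrs ΔP hcoassoc,
    stepE βt hbij qtrs, χ_ΔP βt hbij qtrs mk ΔP hβ hq,
    stepF βt hbij ΔP mk mk2 Φ hβ hΦ]

end Main

end Qtrs14Aux

open Qtrs14Aux in
/-- in the Hopf–Galois setup, the translation map satisfies
`(Δ_P ⊗_B id_P) ∘ qtrs = (σ ⊗_B id_P) ∘ (S ⊗ qtrs) ∘ Δ`, i.e.
`Δ_P([g]₁) ⊗_B [g]₂ = [g⁽²⁾]₁ ⊗ S(g⁽¹⁾) ⊗_B [g⁽²⁾]₂` for all `g ∈ H`, where `σ` is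
the twist. Here `P ⊗_B P` is encoded as `T` (balanced bilinear `mk`), and
`(P ⊗ H) ⊗_B P` as `U` (balanced bilinear `mk2`); `Lt` is induced by `Δ_P ⊗_B id_P`
and `Φ` by `(σ ⊗_B id_P)` applied to `H ⊗ (P ⊗_B P)`. -/
theorem qtrs_antipode_comodule (H P : Type*) [Ring H] [HopfAlgebra ℂ H]
    [Ring P] [Algebra ℂ P]
    (ΔP : P →ₗ[ℂ] P ⊗[ℂ] H)
    (hPmul : ∀ x y : P, ΔP (x * y) = ΔP x * ΔP y) (hPone : ΔP 1 = 1)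
    (hcounit : ∀ x : P,
      (TensorProduct.rid ℂ P)
        ((TensorProduct.map LinearMap.id (Coalgebra.counit (R := ℂ))) (ΔP x)) = x)
    (hcoassoc : ∀ x : P,
      (TensorProduct.assoc ℂ P H H)
        ((TensorProduct.map ΔP LinearMap.id) (ΔP x)) =
      (TensorProduct.map LinearMap.id (Coalgebra.comul (R := ℂ))) (ΔP x))
    -- `T` plays the role of `P ⊗_B P`, with `B` the coinvariant subalgebra
    (T : Type*) [AddCommGroup T] [Module ℂ T]
    (mk : P →ₗ[ℂ] P →ₗ[ℂ] T)
    (hbal : ∀ (x y b : P), ΔP b = b ⊗ₜ[ℂ] 1 → mk (x * b) y = mk x (b * y))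
    (hgen : Submodule.span ℂ {t : T | ∃ x y : P, t = mk x y} = ⊤)
    (βt : T →ₗ[ℂ] P ⊗[ℂ] H)
    (hβ : ∀ x y : P, βt (mk x y) = (x ⊗ₜ[ℂ] (1 : H)) * ΔP y)
    (hbij : Function.Bijective βt)
    (qtrs : H →ₗ[ℂ] T) (hq : ∀ g : H, βt (qtrs g) = (1 : P) ⊗ₜ[ℂ] g)
    -- `U` plays the role of `(P ⊗ H) ⊗_B P`
    (U : Type*) [AddCommGroup U] [Module ℂ U]
    (mk2 : (P ⊗[ℂ] H) →ₗ[ℂ] P →ₗ[ℂ] U)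
    (hbal2 : ∀ (w : P ⊗[ℂ] H) (b y : P), ΔP b = b ⊗ₜ[ℂ] 1 →
      mk2 (w * (b ⊗ₜ[ℂ] (1 : H))) y = mk2 w (b * y))
    -- `Lt` is the map `Δ_P ⊗_B id_P : P ⊗_B P → (P ⊗ H) ⊗_B P`
    (Lt : T →ₗ[ℂ] U)
    (hLt : ∀ x y : P, Lt (mk x y) = mk2 (ΔP x) y)
    -- `Φ` is the map `H ⊗ (P ⊗_B P) → (P ⊗ H) ⊗_B P`, `h ⊗ (x ⊗_B y) ↦ (x ⊗ h) ⊗_B y`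
    (Φ : H ⊗[ℂ] T →ₗ[ℂ] U)
    (hΦ : ∀ (h : H) (x y : P), Φ (h ⊗ₜ[ℂ] mk x y) = mk2 (x ⊗ₜ[ℂ] h) y) :
    ∀ g : H, Lt (qtrs g) =
      Φ ((TensorProduct.map (HopfAlgebra.antipode (R := ℂ)) qtrs)
          (Coalgebra.comul (R := ℂ) g)) := by
  intro g
  set Ψ : T →ₗ[ℂ] U := Φ ∘ₗ NN βt hbij ∘ₗ F1 qtrs ΔP ∘ₗ βt with hΨ
  have key : ∀ t : T, Ψ t = Lt t := by
    have hsub : {t : T | ∃ x y : P, t = mk x y} ⊆ (LinearMap.ker (Ψ - Lt) : Set T) := by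
      rintro t ⟨x, y, rfl⟩
      have : Ψ (mk x y) = Lt (mk x y) := by
        rw [hΨ, LinearMap.comp_apply, LinearMap.comp_apply, LinearMap.comp_apply, hβ,
          ML βt hbij qtrs ΔP mk mk2 Φ hPmul hcoassoc hβ hq hΦ, hLt]
      simpa [LinearMap.mem_ker, sub_eq_zero] using this
    intro t
    have ht : t ∈ Submodule.span ℂ {t : T | ∃ x y : P, t = mk x y} := by
      rw [hgen]; exact Submodule.mem_top
    have := Submodule.span_le.mpr hsub ht
    rw [LinearMap.mem_ker, LinearMap.sub_apply, sub_eq_zero] at this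
    exact this
  rw [← key (qtrs g), hΨ, LinearMap.comp_apply, LinearMap.comp_apply,
    LinearMap.comp_apply, hq]
  have hF1 : F1 qtrs ΔP ((1 : P) ⊗ₜ[ℂ] g) =
      ((1 : P) ⊗ₜ[ℂ] (1 : H)) ⊗ₜ[ℂ] DD (T := T) qtrs g := by
    rw [F1_tmul, hPone, Algebra.TensorProduct.one_def]
  rw [hF1]
  have hNN1 : ∀ v : H ⊗[ℂ] T,
      NN βt hbij (((1 : P) ⊗ₜ[ℂ] (1 : H)) ⊗ₜ[ℂ] v) =
        TensorProduct.map (S' (H := H)) LinearMap.id v := by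
    intro v
    induction v using TensorProduct.induction_on with
    | zero => simp
    | add v₁ v₂ ih₁ ih₂ => simp only [tmul_add, map_add, ih₁, ih₂]
    | tmul b t =>
        rw [NN_tmul, one_mul, Λ_one, TensorProduct.map_tmul, LinearMap.id_apply]
  rw [hNN1]
  have hmap : ∀ v : H ⊗[ℂ] H,
      TensorProduct.map (S' (H := H)) (LinearMap.id : T →ₗ[ℂ] T)
          (LinearMap.lTensor H qtrs v) =
        TensorProduct.map (S' (H := H)) qtrs v := by
    intro v
    induction v using TensorProduct.induction_on with
    | zero => simp
    | add v₁ v₂ ih₁ ih₂ => simp only [map_add, ih₁, ih₂]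
    | tmul a b => rfl
  have hDD : DD (T := T) qtrs g = LinearMap.lTensor H qtrs ((Δc (H := H)) g) := rfl
  rw [hDD, hmap]

end
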